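/- arXiv:2006.09358 — 4 statements merged into one kernel-verified Lean document; each statement's English description precedes it below -/
import Mathlib

section
/- Let a be a nonzero real number, s a real number, and λ > 0. Then the function f(w) = (1/2)(a − w)² + λ·s·|w| on ℝ attains its global minimum at the unique point ŵ = sgn(a)·max(|a| − λ·s, 0), where sgn denotes the sign function. -/
/-- **Unique global minimizer of the one-dimensional directional pruning objective.**
For `a ≠ 0`, `s : ℝ`, `λ > 0`, the function `f w = (1/2)(a - w)² + λ s |w|` attains its
global minimum at the unique point `ŵ = sgn(a) · max (|a| - λ s) 0`. -/
theorem directional_pruning_1d_unique_min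
    (a s lam : ℝ) (ha : a ≠ 0) (hlam : 0 < lam)
    (f : ℝ → ℝ) (hf : ∀ w, f w = (1 / 2) * (a - w) ^ 2 + lam * s * |w|)
    (what : ℝ) (hwhat : what = Real.sign a * max (|a| - lam * s) 0) :
    (∀ w : ℝ, f what ≤ f w) ∧ (∀ w : ℝ, w ≠ what → f what < f w) := by
  have key : ∀ w : ℝ, w ≠ what → f what < f w := by
    intro w hw
    have hw' : w - what ≠ 0 := sub_ne_zero.mpr hw
    have hsq : 0 < (w - what) ^ 2 := by positivity
    rw [hf, hf]
    rcases ha.lt_or_gt with hneg | hpos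
    · rw [Real.sign_of_neg hneg, abs_of_neg hneg] at hwhat
      rcases le_or_gt (-a - lam * s) 0 with ht | ht
      · rw [max_eq_right ht] at hwhat
        norm_num at hwhat
        subst hwhat
        simp only [abs_zero, mul_zero, sub_zero]
        rcases abs_cases w with ⟨h1, h2⟩ | ⟨h1, h2⟩ <;> rw [h1] <;>
          nlinarith [sq_nonneg w, sq_nonneg (a - w), sq_nonneg (lam * s - w),
            sq_nonneg (lam * s + w), sq_nonneg a]
      · rw [max_eq_left ht.le] at hwhat
        have hwneg : what < 0 := by nlinarith
        rw [abs_of_neg hwneg]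
        rcases abs_cases w with ⟨h1, h2⟩ | ⟨h1, h2⟩ <;> rw [h1] <;>
          nlinarith [sq_nonneg w, sq_nonneg (a - w), sq_nonneg (lam * s - w),
            sq_nonneg (lam * s + w), sq_nonneg a, sq_nonneg (w - what), hsq]
    · rw [Real.sign_of_pos hpos, abs_of_pos hpos] at hwhat
      rcases le_or_gt (a - lam * s) 0 with ht | ht
      · rw [max_eq_right ht] at hwhat
        norm_num at hwhat
        subst hwhat
        simp only [abs_zero, mul_zero, sub_zero]
        rcases abs_cases w with ⟨h1, h2⟩ | ⟨h1, h2⟩ <;> rw [h1] <;>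
          nlinarith [sq_nonneg w, sq_nonneg (a - w), sq_nonneg (lam * s - w),
            sq_nonneg (lam * s + w), sq_nonneg a]
      · rw [max_eq_left ht.le] at hwhat
        have hwpos : 0 < what := by nlinarith
        rw [abs_of_pos hwpos]
        rcases abs_cases w with ⟨h1, h2⟩ | ⟨h1, h2⟩ <;> rw [h1] <;>
          nlinarith [sq_nonneg w, sq_nonneg (a - w), sq_nonneg (lam * s - w),
            sq_nonneg (lam * s + w), sq_nonneg a, sq_nonneg (w - what), hsq]
  exact ⟨fun w => by
    by_cases h : w = what
    · rw [h]
    · exact (key w h).le, key⟩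
end

section
/- Let a be a nonzero real number, s < 0, and λ > 0. Then the (non-convex) function f(w) = (1/2)(a − w)² + λ·s·|w| on ℝ has the unique global minimizer ŵ = sgn(a)·(|a| − λ·s); in particular |ŵ| = |a| + λ·|s| > |a|, so the minimizer has strictly larger magnitude than a. -/
/-- **Non-convex case `s < 0`.** For `a ≠ 0`, `s < 0`, `λ > 0`, the (non-convex) function
`f w = (1/2)(a - w)² + λ s |w|` has the unique global minimizer `ŵ = sgn(a) · (|a| - λ s)`;
in particular `|ŵ| = |a| + λ|s| > |a|`, so the minimizer has strictly larger magnitude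
than `a`. -/
theorem directional_pruning_1d_nonconvex_case
    (a s lam : ℝ) (ha : a ≠ 0) (hs : s < 0) (hlam : 0 < lam)
    (f : ℝ → ℝ) (hf : ∀ w, f w = (1 / 2) * (a - w) ^ 2 + lam * s * |w|)
    (what : ℝ) (hwhat : what = Real.sign a * (|a| - lam * s)) :
    ¬ ConvexOn ℝ Set.univ f ∧
    (∀ w : ℝ, f what ≤ f w) ∧ (∀ w : ℝ, w ≠ what → f what < f w) ∧
    |what| = |a| + lam * |s| ∧ |a| < |what| := by
  have ht : lam * s < 0 := mul_neg_of_pos_of_neg hlam hs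
  have hsabs : |s| = -s := abs_of_neg hs
  have hwval : (0 < a ∧ what = a - lam * s) ∨ (a < 0 ∧ what = a + lam * s) := by
    rcases ha.lt_or_gt with h | h
    · right; refine ⟨h, ?_⟩
      rw [hwhat, Real.sign_of_neg h, abs_of_neg h]; ring
    · left; refine ⟨h, ?_⟩
      rw [hwhat, Real.sign_of_pos h, abs_of_pos h]; ring
  have habs : |what| = |a| + lam * |s| := by
    rcases hwval with ⟨h, hw⟩ | ⟨h, hw⟩
    · rw [hw, abs_of_pos (by nlinarith), abs_of_pos h, hsabs]; ring
    · rw [hw, abs_of_neg (by nlinarith), abs_of_neg h, hsabs]; ring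
  have hlt : |a| < |what| := by
    have h0 : 0 < lam * |s| := mul_pos hlam (abs_pos.mpr hs.ne)
    rw [habs]; linarith
  have key : ∀ w, w ≠ what → f what < f w := by
    intro w hw
    rw [hf, hf]
    rcases hwval with ⟨h, hwe⟩ | ⟨h, hwe⟩
    · rw [hwe] at hw ⊢
      rw [abs_of_pos (by nlinarith : (0:ℝ) < a - lam * s)]
      rcases le_or_gt 0 w with hw0 | hw0
      · rw [abs_of_nonneg hw0]
        have h2 : 0 < (w - (a - lam * s)) ^ 2 := by
          have := sub_ne_zero.mpr hw
          positivity
        nlinarith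
      · rw [abs_of_neg hw0]
        nlinarith [sq_nonneg (w + a - lam * s), mul_pos h (neg_pos.mpr hw0)]
    · rw [hwe] at hw ⊢
      rw [abs_of_neg (by nlinarith : a + lam * s < 0)]
      rcases lt_or_ge w 0 with hw0 | hw0
      · rw [abs_of_neg hw0]
        have h2 : 0 < (w - (a + lam * s)) ^ 2 := by
          have := sub_ne_zero.mpr hw
          positivity
        nlinarith
      · rw [abs_of_nonneg hw0]
        rcases hw0.eq_or_lt with hw0e | hw0p
        · rw [← hw0e]
          nlinarith [sq_nonneg (a + lam * s)]
        · nlinarith [sq_nonneg (w + a + lam * s), mul_pos (neg_pos.mpr h) hw0p]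
  have hnc : ¬ ConvexOn ℝ Set.univ f := by
    intro hc
    have h2 := hc.2 (Set.mem_univ (lam * s)) (Set.mem_univ (-(lam * s)))
      (by norm_num : (0:ℝ) ≤ 1/2) (by norm_num : (0:ℝ) ≤ 1/2) (by norm_num)
    simp only [smul_eq_mul] at h2
    have harg : (1/2 : ℝ) * (lam * s) + (1/2 : ℝ) * (-(lam * s)) = 0 := by ring
    rw [harg, hf, hf, hf, abs_zero, abs_neg, abs_of_neg ht] at h2
    have htne : lam * s ≠ 0 := ne_of_lt ht
    have hp : 0 < (lam * s) ^ 2 := by positivity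
    nlinarith [hp, h2]
  refine ⟨hnc, ?_, key, habs, hlt⟩
  intro w
  rcases eq_or_ne w what with rfl | hne
  · exact le_refl _
  · exact (key w hne).le
end

section
/- Let a > 0, s < 0, and λ > 0, and define f(w) = (1/2)(a − w)² + λ·s·|w|. Then f(a − λs) < f(w) for every w ≤ 0; that is, the value of f at the stationary point a − λs on the positive half-line is strictly smaller than the infimum of f over the half-line (−∞, 0]. In particular f(a − λs) = λ·s·a − (λs)²/2 < 0 < a²/2 = f(0), and f(a − λs) < f(a + λs). -/
/-- **Comparison of the stationary points when `a > 0`, `s < 0`.** For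
`f w = (1/2)(a - w)² + λ s |w|`, the value at the positive stationary point `a - λ s`
is strictly smaller than the value of `f` at every `w ≤ 0`; in particular
`f (a - λ s) = λ s a - (λ s)²/2 < 0 < a²/2 = f 0`, and `f (a - λ s) < f (a + λ s)`. -/
theorem directional_pruning_1d_stationary_comparison
    (a s lam : ℝ) (ha : 0 < a) (hs : s < 0) (hlam : 0 < lam)
    (f : ℝ → ℝ) (hf : ∀ w, f w = (1 / 2) * (a - w) ^ 2 + lam * s * |w|) :
    (∀ w : ℝ, w ≤ 0 → f (a - lam * s) < f w) ∧
    f (a - lam * s) = lam * s * a - (lam * s) ^ 2 / 2 ∧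
    f (a - lam * s) < 0 ∧
    (0 : ℝ) < a ^ 2 / 2 ∧
    f 0 = a ^ 2 / 2 ∧
    f (a - lam * s) < f (a + lam * s) := by
  have hls : lam * s < 0 := mul_neg_of_pos_of_neg hlam hs
  have hpos : 0 < a - lam * s := by linarith
  have hval : f (a - lam * s) = lam * s * a - (lam * s) ^ 2 / 2 := by
    rw [hf, abs_of_pos hpos]; ring
  refine ⟨?_, hval, ?_, by positivity, ?_, ?_⟩
  · intro w hw
    rw [hf w, abs_of_nonpos hw, hval]
    nlinarith [sq_nonneg (a - w + lam*s), mul_neg_of_pos_of_neg ha hls]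
  · nlinarith [sq_nonneg (lam * s), mul_pos_of_neg_of_neg hls hs]
  · rw [hf]; simp; ring
  · rw [hval, hf]
    rcases abs_cases (a + lam * s) with ⟨h1, h2⟩ | ⟨h1, h2⟩ <;> rw [h1] <;> nlinarith [sq_nonneg (lam*s)]
end

section
/- Let d ≥ 1, μ ∈ (0, 1), λ > 0, C₁ ≥ 0, M ≥ 0, let P be a d×d real matrix, let a : (0, ∞) → [0, ∞) be a function, let Φ : {(t, s) : 0 ≤ s ≤ t} → (d×d real matrices) be such that s ↦ Φ(t, s) is measurable for each t and ‖Φ(t, s) − P‖ ≤ C₁·e^{−λ(t−s)} + a(t) for all 0 ≤ s ≤ t (spectral norm), and let u : [0, ∞) → ℝ^d be measurable with ‖u(s)‖₂ ≤ M for all s. Then there exists a constant C > 0 such that for all t ≥ 1: ‖∫_0^t s^{μ−1}·Φ(t, s)·u(s) ds − P·∫_0^t s^{μ−1}·u(s) ds‖₂ ≤ C·(t^{μ−1} + t^μ·a(t)). -/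
/-!
Writing `Φ(t,s) = P + (Φ(t,s) - P)`, the difference of the two integrals is
`∫₀ᵗ s^{μ-1} (Φ(t,s) - P) u(s) ds`, of norm at most
`M ∫₀ᵗ s^{μ-1} (C₁ e^{-λ(t-s)} + a(t)) ds`.
The `a(t)` part integrates to `a(t) t^μ / μ`. For the exponential part split `[0,t]` at `t/2`:
on `[0,t/2]` the exponential is at most `e^{-λt/2}` and `t e^{-λt/2} ≲ 1/λ` absorbs the extra
factor `t` of `∫₀^{t/2} s^{μ-1} ds`; on `[t/2,t]` the weight is at most `(t/2)^{μ-1}` and the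
exponential integrates to at most `1/λ`.
-/

open MeasureTheory Set intervalIntegral Real
open scoped Interval

theorem StronglyMeasurable.clm_apply {α 𝕜 E F : Type*} [MeasurableSpace α]
    [NontriviallyNormedField 𝕜] [NormedAddCommGroup E] [NormedSpace 𝕜 E]
    [NormedAddCommGroup F] [NormedSpace 𝕜 F] {Φ : α → E →L[𝕜] F} {u : α → E}
    (hΦ : StronglyMeasurable Φ) (hu : StronglyMeasurable u) :
    StronglyMeasurable fun x => Φ x (u x) :=
  isBoundedBilinearMap_apply.continuous.comp_stronglyMeasurable (hΦ.prodMk hu)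

section WeightedIntegral

variable {E F : Type*} [NormedAddCommGroup E] [NormedSpace ℝ E]
  [NormedAddCommGroup F] [NormedSpace ℝ F] {μ : Measure ℝ} {a b : ℝ} {w : ℝ → ℝ}

theorem IntervalIntegrable.smul_of_norm_le {v : ℝ → E} {B : ℝ}
    (hw : IntervalIntegrable w μ a b) (hv : AEStronglyMeasurable v (μ.restrict (Ι a b)))
    (hB : ∀ s ∈ Ι a b, ‖v s‖ ≤ B) : IntervalIntegrable (fun s => w s • v s) μ a b :=
  intervalIntegrable_iff.2 <|
    (intervalIntegrable_iff.1 hw).smul_bdd B hv (ae_restrict_of_forall_mem measurableSet_uIoc hB)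

theorem intervalIntegral_smul_apply_sub_map_integral [CompleteSpace E] [CompleteSpace F]
    {Φ : ℝ → E →L[ℝ] F} {P : E →L[ℝ] F} {u : ℝ → E}
    (hΦu : IntervalIntegrable (fun s => w s • Φ s (u s)) μ a b)
    (hu : IntervalIntegrable (fun s => w s • u s) μ a b) :
    (∫ s in a..b, w s • Φ s (u s) ∂μ) - P (∫ s in a..b, w s • u s ∂μ) =
      ∫ s in a..b, w s • (Φ s - P) (u s) ∂μ := by
  have hPu : IntervalIntegrable (fun s => P (w s • u s)) μ a b :=
    ⟨P.integrable_comp hu.1, P.integrable_comp hu.2⟩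
  rw [← P.intervalIntegral_comp_comm hu, ← integral_sub hΦu hPu]
  simp only [sub_apply, smul_sub, map_smul]

theorem norm_intervalIntegral_smul_apply_le {Ψ : ℝ → E →L[ℝ] F} {u : ℝ → E} {g : ℝ → ℝ}
    {M : ℝ} (hab : a ≤ b) (hw : ∀ s ∈ Ioc a b, 0 ≤ w s) (hΨ : ∀ s ∈ Ioc a b, ‖Ψ s‖ ≤ g s)
    (hu : ∀ s ∈ Ioc a b, ‖u s‖ ≤ M)
    (hwg : IntervalIntegrable (fun s => w s * g s) μ a b) :
    ‖∫ s in a..b, w s • Ψ s (u s) ∂μ‖ ≤ M * ∫ s in a..b, w s * g s ∂μ := by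
  rw [← intervalIntegral.integral_const_mul]
  refine norm_integral_le_of_norm_le hab (ae_of_all _ fun s hs => ?_) (hwg.const_mul M)
  rw [norm_smul, Real.norm_of_nonneg (hw s hs)]
  calc w s * ‖Ψ s (u s)‖ ≤ w s * (g s * M) :=
        mul_le_mul_of_nonneg_left ((Ψ s).le_of_opNorm_le_of_le (hΨ s hs) (hu s hs)) (hw s hs)
    _ = M * (w s * g s) := by ring

end WeightedIntegral

theorem integral_rpow_sub_one {mu c : ℝ} (hmu : 0 < mu) :
    ∫ s in (0 : ℝ)..c, s ^ (mu - 1) = c ^ mu / mu := by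
  rw [integral_rpow (Or.inl (by linarith)), sub_add_cancel, zero_rpow hmu.ne', sub_zero]

theorem integral_exp_neg_mul_sub_le {lam a b t : ℝ} (hlam : 0 < lam) (hb : b ≤ t) :
    ∫ s in a..b, exp (-(lam * (t - s))) ≤ 1 / lam := by
  have hlin : ∀ s, -(lam * (t - s)) = lam * s - lam * t := fun s => by ring
  simp_rw [hlin]
  rw [integral_comp_mul_sub exp hlam.ne', integral_exp, smul_eq_mul, one_div]
  have hexp : exp (lam * b - lam * t) ≤ 1 := exp_le_one_iff.2 (by nlinarith)
  have hexp_a := exp_pos (lam * a - lam * t)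
  calc lam⁻¹ * (exp (lam * b - lam * t) - exp (lam * a - lam * t)) ≤ lam⁻¹ * 1 := by
        gcongr; linarith
    _ = lam⁻¹ := mul_one _

theorem integral_rpow_mul_exp_neg_le {mu lam t : ℝ} (hmu0 : 0 < mu) (hmu1 : mu ≤ 1)
    (hlam : 0 < lam) (ht : 0 < t) :
    ∫ s in (0 : ℝ)..t, s ^ (mu - 1) * exp (-(lam * (t - s))) ≤
      (1 / (lam * mu) + 1 / lam) * (t / 2) ^ (mu - 1) := by
  set c := t / 2 with hc
  have hc0 : 0 < c := by positivity
  have hint : ∀ x y : ℝ,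
      IntervalIntegrable (fun s => s ^ (mu - 1) * exp (-(lam * (t - s)))) volume x y :=
    fun x y => (intervalIntegrable_rpow' (by linarith)).mul_continuousOn
      (by fun_prop : Continuous fun s => exp (-(lam * (t - s)))).continuousOn
  rw [← integral_add_adjacent_intervals (hint 0 c) (hint c t)]
  have hnear : ∫ s in (0 : ℝ)..c, s ^ (mu - 1) * exp (-(lam * (t - s))) ≤
      c ^ (mu - 1) / (lam * mu) := by
    calc ∫ s in (0 : ℝ)..c, s ^ (mu - 1) * exp (-(lam * (t - s)))
        ≤ ∫ s in (0 : ℝ)..c, s ^ (mu - 1) * exp (-(lam * c)) := by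
          refine integral_mono_on hc0.le (hint 0 c)
            ((intervalIntegrable_rpow' (by linarith)).mul_const _) fun s hs => ?_
          gcongr
          · exact rpow_nonneg hs.1 _
          · linarith [hs.2]
      _ = c ^ (mu - 1) * (lam * c * exp (-(lam * c))) / (lam * mu) := by
          rw [intervalIntegral.integral_mul_const, integral_rpow_sub_one hmu0,
            rpow_sub_one hc0.ne']
          field_simp
      _ ≤ c ^ (mu - 1) * 1 / (lam * mu) := by
          gcongr
          exact (mul_exp_neg_le_exp_neg_one _).trans (exp_le_one_iff.2 (by norm_num))
      _ = c ^ (mu - 1) / (lam * mu) := by rw [mul_one]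
  have hfar : ∫ s in c..t, s ^ (mu - 1) * exp (-(lam * (t - s))) ≤ c ^ (mu - 1) / lam := by
    calc ∫ s in c..t, s ^ (mu - 1) * exp (-(lam * (t - s)))
        ≤ ∫ s in c..t, c ^ (mu - 1) * exp (-(lam * (t - s))) := by
          refine integral_mono_on (by linarith) (hint c t)
            ((by fun_prop : Continuous fun s => c ^ (mu - 1) * exp (-(lam * (t - s))))
              |>.intervalIntegrable _ _) fun s hs => ?_
          exact mul_le_mul_of_nonneg_right (rpow_le_rpow_of_nonpos hc0 hs.1 (by linarith))
            (exp_pos _).le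
      _ ≤ c ^ (mu - 1) * (1 / lam) := by
          rw [intervalIntegral.integral_const_mul]
          gcongr
          exact integral_exp_neg_mul_sub_le hlam le_rfl
      _ = c ^ (mu - 1) / lam := mul_one_div _ _
  calc _ ≤ c ^ (mu - 1) / (lam * mu) + c ^ (mu - 1) / lam := add_le_add hnear hfar
    _ = _ := by ring

theorem integral_rpow_mul_exp_add_le {mu lam C A t : ℝ} (hmu0 : 0 < mu) (hmu1 : mu ≤ 1)
    (hlam : 0 < lam) (hC : 0 ≤ C) (ht : 0 < t) :
    ∫ s in (0 : ℝ)..t, s ^ (mu - 1) * (C * exp (-(lam * (t - s))) + A) ≤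
      C * ((1 / (lam * mu) + 1 / lam) / 2 ^ (mu - 1)) * t ^ (mu - 1) + A / mu * t ^ mu := by
  have hw : IntervalIntegrable (fun s : ℝ => s ^ (mu - 1)) volume 0 t :=
    intervalIntegrable_rpow' (by linarith)
  have hwexp : IntervalIntegrable (fun s => s ^ (mu - 1) * exp (-(lam * (t - s)))) volume 0 t :=
    hw.mul_continuousOn (by fun_prop : Continuous fun s => exp (-(lam * (t - s)))).continuousOn
  have hsplit : ∫ s in (0 : ℝ)..t, s ^ (mu - 1) * (C * exp (-(lam * (t - s))) + A) =
      C * (∫ s in (0 : ℝ)..t, s ^ (mu - 1) * exp (-(lam * (t - s)))) + A * (t ^ mu / mu) := by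
    simp_rw [mul_add, mul_left_comm _ C, mul_comm _ A]
    rw [integral_add (hwexp.const_mul C) (hw.const_mul A), intervalIntegral.integral_const_mul,
      intervalIntegral.integral_const_mul, integral_rpow_sub_one hmu0]
  have hkernel := integral_rpow_mul_exp_neg_le hmu0 hmu1 hlam ht
  rw [div_rpow ht.le zero_le_two] at hkernel
  rw [hsplit]
  calc _ ≤ C * ((1 / (lam * mu) + 1 / lam) * (t ^ (mu - 1) / 2 ^ (mu - 1))) +
        A * (t ^ mu / mu) := by gcongr
    _ = _ := by ring

theorem drift_integral_projection_approximation_general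
    (d : ℕ) (mu lam C1 M : ℝ)
    (hmu0 : 0 < mu) (hmu1 : mu < 1) (hlam : 0 < lam) (hC1 : 0 ≤ C1) (hM : 0 ≤ M)
    (P : EuclideanSpace ℝ (Fin d) →L[ℝ] EuclideanSpace ℝ (Fin d))
    (a : ℝ → ℝ) (ha : ∀ t > (0:ℝ), 0 ≤ a t)
    (Φ : ℝ → ℝ → (EuclideanSpace ℝ (Fin d) →L[ℝ] EuclideanSpace ℝ (Fin d)))
    (hΦmeas : ∀ t, StronglyMeasurable fun s => Φ t s)
    (hΦ : ∀ t s : ℝ, 0 ≤ s → s ≤ t →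
      ‖Φ t s - P‖ ≤ C1 * Real.exp (-(lam * (t - s))) + a t)
    (u : ℝ → EuclideanSpace ℝ (Fin d)) (humeas : StronglyMeasurable u)
    (hu : ∀ s, ‖u s‖ ≤ M) :
    ∃ C > 0, ∀ t ≥ (1:ℝ),
      ‖(∫ s in (0:ℝ)..t, s ^ (mu - 1) • (Φ t s) (u s)) -
          P (∫ s in (0:ℝ)..t, s ^ (mu - 1) • u s)‖
        ≤ C * (t ^ (mu - 1) + t ^ mu * a t) := by
  set K := (1 / (lam * mu) + 1 / lam) / 2 ^ (mu - 1)
  refine ⟨M * C1 * K + M / mu + 1, by positivity, fun t ht => ?_⟩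
  have ht0 : 0 < t := by linarith
  have hat : 0 ≤ a t := ha t ht0
  have hΦ_le : ∀ s ∈ Ι 0 t, ‖Φ t s‖ ≤ ‖P‖ + (C1 + a t) := fun s hs => by
    rw [uIoc_of_le ht0.le] at hs
    have hdecay : exp (-(lam * (t - s))) ≤ 1 :=
      exp_le_one_iff.2 (neg_nonpos.2 (mul_nonneg hlam.le (sub_nonneg.2 hs.2)))
    calc ‖Φ t s‖ ≤ ‖P‖ + ‖Φ t s - P‖ := norm_le_norm_add_norm_sub' _ _
      _ ≤ ‖P‖ + (C1 + a t) := by grw [hΦ t s hs.1.le hs.2, hdecay, mul_one]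
  have hw : IntervalIntegrable (fun s : ℝ => s ^ (mu - 1)) volume 0 t :=
    intervalIntegrable_rpow' (by linarith)
  have hΦu := hw.smul_of_norm_le
    (StronglyMeasurable.clm_apply (hΦmeas t) humeas).aestronglyMeasurable
    fun s hs => (Φ t s).le_of_opNorm_le_of_le (hΦ_le s hs) (hu s)
  have hwu := hw.smul_of_norm_le humeas.aestronglyMeasurable fun s _ => hu s
  rw [intervalIntegral_smul_apply_sub_map_integral hΦu hwu]
  calc _ ≤ M * ∫ s in (0 : ℝ)..t, s ^ (mu - 1) * (C1 * exp (-(lam * (t - s))) + a t) :=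
        norm_intervalIntegral_smul_apply_le ht0.le (fun s hs => rpow_nonneg hs.1.le _)
          (fun s hs => hΦ t s hs.1.le hs.2) (fun s _ => hu s)
          (hw.mul_continuousOn (by fun_prop : Continuous fun s =>
            C1 * exp (-(lam * (t - s))) + a t).continuousOn)
    _ ≤ M * (C1 * K * t ^ (mu - 1) + a t / mu * t ^ mu) := by
        grw [integral_rpow_mul_exp_add_le hmu0 hmu1.le hlam hC1 ht0]
    _ = M * C1 * K * t ^ (mu - 1) + M / mu * (t ^ mu * a t) := by ring
    _ ≤ _ := by
        have : 0 ≤ M * C1 * K := by positivity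
        have : 0 ≤ M / mu := by positivity
        rw [mul_add]
        gcongr <;> linarith

/-- **Replacing the principal matrix solution by the limiting projection in the drift
integral.** If `‖Φ(t,s) - P‖ ≤ C₁ e^{-λ(t-s)} + a(t)` (operator norm on linear maps of
`ℝ^d`, i.e. spectral norm) for `0 ≤ s ≤ t` and `‖u(s)‖₂ ≤ M`, then
`‖∫₀^t s^{μ-1} Φ(t,s) u(s) ds - P ∫₀^t s^{μ-1} u(s) ds‖₂ ≤ C (t^{μ-1} + t^μ a(t))`
for all `t ≥ 1`, for some constant `C > 0`. -/
theorem drift_integral_projection_approximation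
    (d : ℕ) (hd : 1 ≤ d) (mu lam C1 M : ℝ)
    (hmu0 : 0 < mu) (hmu1 : mu < 1) (hlam : 0 < lam) (hC1 : 0 ≤ C1) (hM : 0 ≤ M)
    (P : EuclideanSpace ℝ (Fin d) →L[ℝ] EuclideanSpace ℝ (Fin d))
    (a : ℝ → ℝ) (ha : ∀ t > (0:ℝ), 0 ≤ a t)
    (Φ : ℝ → ℝ → (EuclideanSpace ℝ (Fin d) →L[ℝ] EuclideanSpace ℝ (Fin d)))
    (hΦmeas : ∀ t, StronglyMeasurable fun s => Φ t s)
    (hΦ : ∀ t s : ℝ, 0 ≤ s → s ≤ t →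
      ‖Φ t s - P‖ ≤ C1 * Real.exp (-(lam * (t - s))) + a t)
    (u : ℝ → EuclideanSpace ℝ (Fin d)) (humeas : StronglyMeasurable u)
    (hu : ∀ s, ‖u s‖ ≤ M) :
    ∃ C > 0, ∀ t ≥ (1:ℝ),
      ‖(∫ s in (0:ℝ)..t, s ^ (mu - 1) • (Φ t s) (u s)) -
          P (∫ s in (0:ℝ)..t, s ^ (mu - 1) • u s)‖
        ≤ C * (t ^ (mu - 1) + t ^ mu * a t) :=
  drift_integral_projection_approximation_general d mu lam C1 M hmu0 hmu1 hlam hC1 hM P a ha Φ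
    hΦmeas hΦ u humeas hu
end
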